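/- Let {X^{(k)}}_{k∈ℕ} be a sequence of Galton–Watson branching processes, where X^{(k)} has Binomial(N_k, q_k) offspring distribution and X^{(k)}_0 = 1. Suppose there exist C > 0 and k_0 such that for all k ≥ k_0: (i) q_k ≤ 1/2 and (ii) 1 ≤ N_k q_k ≤ 1 + C/k. Then limsup_{k→∞} k · P(X^{(k)}_k > 0) ≤ 4C/(1 − e^{−C}). -/

import Mathlib

open MeasureTheory ProbabilityTheory Filter
open scoped ENNReal Classical

noncomputable section

/-- The Galton–Watson process built from the offspring variables `ξ n i`:
`X_0 = 1`, `X_{n+1} = Σ_{i<X_n} ξ n i`. -/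
def gw (ξ : ℕ → ℕ → ℕ) : ℕ → ℕ
  | 0 => 1
  | n + 1 => ∑ i ∈ Finset.range (gw ξ n), ξ n i

/-- The Binomial(N,q) probability mass function at `j`. -/
def binomPMF (N : ℕ) (q : ℝ) (j : ℕ) : ℝ := (N.choose j : ℝ) * q ^ j * (1 - q) ^ (N - j)

/-- The variables `ξ ω n i` form an i.i.d. Binomial(N,q) family under `μ`. -/
def IsBinomField {Ω : Type} [MeasurableSpace Ω] (μ : Measure Ω) (N : ℕ) (q : ℝ)
    (ξ : Ω → ℕ → ℕ → ℕ) : Prop :=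
  (∀ n i, Measurable fun ω => ξ ω n i) ∧
  iIndepFun (m := fun _ => ⊤) (fun (q : ℕ × ℕ) ω => ξ ω q.1 q.2) μ ∧
  (∀ n i j, μ {ω | ξ ω n i = j} = ENNReal.ofReal (binomPMF N q j))

/-- Key polynomial inequality: for `N ≥ 2`, `x ∈ [0,1]`,
`(1-x)^N * (4+Nx) ≥ 4 - 3Nx`. -/
lemma keyA (M : ℕ) {x : ℝ} (hx0 : 0 ≤ x) (hx1 : x ≤ 1) :
    4 - 3 * ((M+2 : ℕ) : ℝ) * x ≤ (1 - x) ^ (M+2) * (4 + ((M+2 : ℕ) : ℝ) * x) := by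
  induction M with
  | zero =>
      push_cast
      nlinarith [sq_nonneg x, pow_nonneg (sub_nonneg.2 hx1) 2]
  | succ m ih =>
      have hn : (0:ℝ) ≤ ((m+2 : ℕ) : ℝ) := by positivity
      have hd : (0:ℝ) < 4 + ((m+2 : ℕ) : ℝ) * x := by positivity
      have h1x : (0:ℝ) ≤ 1 - x := by linarith
      -- (1-x)^(m+3) * (4+(m+3)x) ≥ (1-x) * (4-3(m+2)x)/(4+(m+2)x) * (4+(m+3)x)
      have hpow : (1-x) ^ (m+3) = (1-x) * (1-x)^(m+2) := by ring
      push_cast at ih ⊢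
      set n : ℝ := (m : ℝ) with hn'
      have hn0 : 0 ≤ n := Nat.cast_nonneg m
      -- from ih : 4 - 3*(n+2)*x ≤ (1-x)^(m+2) * (4+(n+2)*x)
      have key : (4 - 3*(n+2)*x) * (4 + (n+3)*x) * (1 - x)
          ≤ (1-x)^(m+2) * (4+(n+2)*x) * ((4 + (n+3)*x) * (1-x)) := by
        have h2 : 0 ≤ (4 + (n+3)*x) * (1-x) := by positivity
        nlinarith [mul_le_mul_of_nonneg_right ih h2]
      have expand : (4 - 3*(n+3)*x) * (4 + (n+2)*x)
          ≤ (4 - 3*(n+2)*x) * (4 + (n+3)*x) * (1 - x) := by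
        nlinarith [sq_nonneg x, mul_nonneg (mul_nonneg hn0 hx0) hx0,
          mul_nonneg (mul_nonneg (mul_nonneg hn0 hn0) hx0) (mul_nonneg hx0 hx0),
          mul_nonneg (mul_nonneg hn0 hx0) (mul_nonneg hx0 hx0),
          mul_nonneg hx0 hx0, mul_nonneg (mul_nonneg hx0 hx0) hx0]
      have hd3 : (0:ℝ) < 4 + (n+2)*x := by positivity
      have final : (4 - 3*(n+3)*x) * (4 + (n+2)*x)
          ≤ ((1-x) * (1-x)^(m+2) * (4 + (n+3)*x)) * (4 + (n+2)*x) := by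
        calc (4 - 3*(n+3)*x) * (4 + (n+2)*x)
            ≤ (4 - 3*(n+2)*x) * (4 + (n+3)*x) * (1 - x) := expand
          _ ≤ (1-x)^(m+2) * (4+(n+2)*x) * ((4 + (n+3)*x) * (1-x)) := key
          _ = ((1-x) * (1-x)^(m+2) * (4 + (n+3)*x)) * (4 + (n+2)*x) := by ring
      have final2 : (4 - 3*(n+3)*x) * (4 + (n+2)*x)
          ≤ ((1-x)^(m+3) * (4 + (n+3)*x)) * (4 + (n+2)*x) := by
        calc (4 - 3*(n+3)*x) * (4 + (n+2)*x) ≤ _ := final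
          _ = ((1-x)^(m+3) * (4 + (n+3)*x)) * (4+(n+2)*x) := by ring
      have := le_of_mul_le_mul_right final2 hd3
      calc 4 - 3 * ((m:ℝ) + 1 + 2) * x = 4 - 3*(n+3)*x := by rw [hn']; ring
        _ ≤ (1-x)^(m+3) * (4 + (n+3)*x) := this
        _ = (1-x)^(m+1+2) * (4 + ((m:ℝ)+1+2)*x) := by rw [hn']; ring_nf

lemma recur_step {N : ℕ} (hN : 2 ≤ N) {q p : ℝ} (hq : 0 < q) (hq2 : q ≤ 1/2)
    (hp : 0 < p) (hp1 : p ≤ 1) :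
    0 < 1 - (1 - q*p)^N ∧ 1 - (1 - q*p)^N ≤ 1 ∧
      1/((N:ℝ)*q) * (1/p) + 1/4 ≤ 1/(1 - (1 - q*p)^N) := by
  set x := q * p with hx
  have hx0 : 0 < x := mul_pos hq hp
  have hx1 : x ≤ 1/2 := by
    calc x ≤ q * 1 := by nlinarith
      _ ≤ 1/2 := by linarith
  have hx1' : x ≤ 1 := by linarith
  have h1x0 : 0 ≤ 1 - x := by linarith
  have h1x1 : 1 - x < 1 := by linarith
  have hNpos : (0:ℝ) < N := by positivity
  obtain ⟨M, rfl⟩ : ∃ M, N = M + 2 := ⟨N - 2, by omega⟩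
  have hkey := keyA M (le_of_lt hx0) hx1'
  have hpowlt : (1 - x)^(M+2) < 1 := pow_lt_one₀ h1x0 h1x1 (by omega)
  have hpow0 : 0 ≤ (1 - x)^(M+2) := pow_nonneg h1x0 _
  have hs0 : 0 < 1 - (1 - x)^(M+2) := by linarith
  refine ⟨hs0, by linarith, ?_⟩
  set n : ℝ := ((M+2 : ℕ) : ℝ) with hn
  have hn0 : (0:ℝ) < n := by positivity
  -- (4 + n x)(1 - (1-x)^N) ≤ 4 n x
  have hmain : (4 + n * x) * (1 - (1 - x)^(M+2)) ≤ 4 * (n * x) := by nlinarith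
  have hnx : 0 < n * x := by positivity
  -- 1/s ≥ (4+nx)/(4nx)
  have h1 : (4 + n*x) / (4 * (n*x)) ≤ 1 / (1 - (1-x)^(M+2)) := by
    rw [div_le_div_iff₀ (by positivity) hs0]
    nlinarith
  calc 1/((n:ℝ)*q) * (1/p) + 1/4 = (4 + n*x) / (4*(n*x)) := by
        field_simp
        ring
    _ ≤ 1 / (1 - (1-x)^(M+2)) := h1

lemma iter_bound {N : ℕ} (hN : 2 ≤ N) {q : ℝ} (hq : 0 < q) (hq2 : q ≤ 1/2)
    (hm : 1 ≤ (N:ℝ)*q) (p : ℕ → ℝ) (hp0 : p 0 = 1)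
    (hrec : ∀ n, p (n+1) = 1 - (1 - q * p n)^N) :
    ∀ n, 0 < p n ∧ p n ≤ 1 ∧
      (1/4) * ∑ i ∈ Finset.range n, (1/((N:ℝ)*q))^i ≤ 1/(p n) := by
  intro n
  induction n with
  | zero => simp [hp0]
  | succ n ih =>
      obtain ⟨hpos, hle, hsum⟩ := ih
      obtain ⟨h1, h2, h3⟩ := recur_step hN hq hq2 hpos hle
      rw [← hrec n] at h1 h2 h3
      refine ⟨h1, h2, ?_⟩
      have hr0 : 0 < 1/((N:ℝ)*q) := by positivity
      have step : 1/((N:ℝ)*q) * ((1/4) * ∑ i ∈ Finset.range n, (1/((N:ℝ)*q))^i) + 1/4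
          ≤ 1/(p (n+1)) := by
        calc 1/((N:ℝ)*q) * ((1/4) * ∑ i ∈ Finset.range n, (1/((N:ℝ)*q))^i) + 1/4
            ≤ 1/((N:ℝ)*q) * (1/(p n)) + 1/4 := by
              have := mul_le_mul_of_nonneg_left hsum (le_of_lt hr0)
              linarith
          _ ≤ 1/(p (n+1)) := h3
      calc (1/4) * ∑ i ∈ Finset.range (n+1), (1/((N:ℝ)*q))^i
          = 1/((N:ℝ)*q) * ((1/4) * ∑ i ∈ Finset.range n, (1/((N:ℝ)*q))^i) + 1/4 := by
            rw [geom_sum_succ]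
            ring
        _ ≤ 1/(p (n+1)) := step

lemma per_k {C : ℝ} (hC : 0 < C) {k N : ℕ} (hk : 1 ≤ k) {q : ℝ} (hq2 : q ≤ 1/2)
    (h1 : 1 ≤ (N:ℝ)*q) (h2 : (N:ℝ)*q ≤ 1 + C/k) (p : ℕ → ℝ) (hp0 : p 0 = 1)
    (hrec : ∀ n, p (n+1) = 1 - (1 - q * p n)^N) :
    (k:ℝ) * p k ≤ 4*C/(1 - Real.exp (-C)) := by
  have hkR : (0:ℝ) < k := by exact_mod_cast hk
  have hq0 : 0 < q := by
    by_contra h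
    push_neg at h
    have : (N:ℝ) * q ≤ 0 := mul_nonpos_of_nonneg_of_nonpos (Nat.cast_nonneg N) h
    linarith
  have hN2 : 2 ≤ N := by
    by_contra h
    push_neg at h
    interval_cases N <;> simp_all <;> nlinarith
  obtain ⟨hpos, hle, hsum⟩ := iter_bound hN2 hq0 hq2 h1 p hp0 hrec k
  -- each term (1/(Nq))^i ≥ (exp(-C/k))^i
  have hterm : ∀ i, (Real.exp (-(C/k)))^i ≤ (1/((N:ℝ)*q))^i := by
    intro i
    apply pow_le_pow_left₀ (le_of_lt (Real.exp_pos _))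
    rw [Real.exp_neg, one_div]
    have hble : (N:ℝ)*q ≤ Real.exp (C/k) := by
      have := Real.add_one_le_exp (C/k)
      linarith
    exact inv_anti₀ (by positivity) hble
  have hsum2 : ∑ i ∈ Finset.range k, (Real.exp (-(C/k)))^i
      ≤ ∑ i ∈ Finset.range k, (1/((N:ℝ)*q))^i :=
    Finset.sum_le_sum fun i _ => hterm i
  set r : ℝ := Real.exp (-(C/k)) with hr
  have hr0 : 0 < r := Real.exp_pos _
  have hCk : (0:ℝ) < C/k := by positivity
  have hrlt1 : r < 1 := by
    rw [hr, Real.exp_lt_one_iff]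
    linarith
  have hrk : r ^ k = Real.exp (-C) := by
    rw [hr, ← Real.exp_nat_mul]
    congr 1
    field_simp
  have hgeo : ∑ i ∈ Finset.range k, r^i = (1 - Real.exp (-C)) / (1 - r) := by
    rw [geom_sum_eq (ne_of_lt hrlt1), hrk]
    rw [div_eq_div_iff (by linarith) (by linarith)]
    ring
  have h1r : 1 - r ≤ C/k := by
    have := Real.add_one_le_exp (-(C/k))
    rw [← hr] at this
    linarith
  have h1r0 : 0 < 1 - r := by linarith
  have hEC : 0 < 1 - Real.exp (-C) := by
    have : Real.exp (-C) < 1 := by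
      rw [Real.exp_lt_one_iff]; linarith
    linarith
  have hsum3 : (k:ℝ) * (1 - Real.exp (-C)) / C ≤ ∑ i ∈ Finset.range k, r^i := by
    rw [hgeo]
    rw [div_le_div_iff₀ (by positivity) h1r0]
    calc (k:ℝ) * (1 - Real.exp (-C)) * (1-r) ≤ (k:ℝ) * (1 - Real.exp (-C)) * (C/k) := by
          apply mul_le_mul_of_nonneg_left h1r (by positivity)
      _ = (1 - Real.exp (-C)) * C := by field_simp
  -- combine
  have hfin : (1/4) * ((k:ℝ) * (1 - Real.exp (-C)) / C) ≤ 1 / p k := by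
    calc (1/4) * ((k:ℝ) * (1 - Real.exp (-C)) / C)
        ≤ (1/4) * ∑ i ∈ Finset.range k, r^i := by
          apply mul_le_mul_of_nonneg_left hsum3 (by norm_num)
      _ ≤ (1/4) * ∑ i ∈ Finset.range k, (1/((N:ℝ)*q))^i := by
          apply mul_le_mul_of_nonneg_left hsum2 (by norm_num)
      _ ≤ 1 / p k := hsum
  have hD : (0:ℝ) < (1/4) * ((k:ℝ) * (1 - Real.exp (-C)) / C) := by positivity
  have hpk : p k ≤ 1 / ((1/4) * ((k:ℝ) * (1 - Real.exp (-C)) / C)) := by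
    rw [le_div_iff₀ hD]
    have h' := mul_le_mul_of_nonneg_right hfin (le_of_lt hpos)
    calc p k * ((1/4) * ((k:ℝ) * (1 - Real.exp (-C)) / C))
        = (1/4) * ((k:ℝ) * (1 - Real.exp (-C)) / C) * p k := by ring
      _ ≤ (1 / p k) * p k := h'
      _ = 1 := by field_simp
  calc (k:ℝ) * p k ≤ (k:ℝ) * (1 / ((1/4) * ((k:ℝ) * (1 - Real.exp (-C)) / C))) :=
        mul_le_mul_of_nonneg_left hpk (le_of_lt hkR)
    _ = 4*C/(1 - Real.exp (-C)) := by
        field_simp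

section Prob

variable {Ω : Type} [mΩ : MeasurableSpace Ω] {μ : Measure Ω} [IsProbabilityMeasure μ]
  {N : ℕ} {q : ℝ} {ξ : Ω → ℕ → ℕ → ℕ}

/-- comap σ-algebras of the individual variables -/
def coal (ξ : Ω → ℕ → ℕ → ℕ) (p : ℕ × ℕ) : MeasurableSpace Ω :=
  MeasurableSpace.comap (fun ω => ξ ω p.1 p.2) ⊤

/-- σ-algebra of rows `< n` -/
def rowsLT (ξ : Ω → ℕ → ℕ → ℕ) (n : ℕ) : MeasurableSpace Ω :=
  ⨆ p ∈ {p : ℕ × ℕ | p.1 < n}, coal ξ p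

lemma coal_le (hm : ∀ n i, Measurable fun ω => ξ ω n i) (p : ℕ × ℕ) :
    coal ξ p ≤ mΩ := by
  rw [coal, ← measurable_iff_comap_le]
  exact hm p.1 p.2

lemma rowsLT_le (hm : ∀ n i, Measurable fun ω => ξ ω n i) (n : ℕ) :
    rowsLT ξ n ≤ mΩ := by
  apply iSup₂_le
  intro p _
  exact coal_le hm p

lemma rowsLT_mono {n n' : ℕ} (h : n ≤ n') : rowsLT ξ n ≤ rowsLT ξ n' := by
  apply iSup₂_le
  intro p hp
  exact le_biSup _ (show p ∈ {p : ℕ × ℕ | p.1 < n'} from lt_of_lt_of_le hp h)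

lemma coal_le_rowsLT {n i n' : ℕ} (h : n < n') : coal ξ (n, i) ≤ rowsLT ξ n' :=
  le_biSup _ (show ((n,i) : ℕ × ℕ) ∈ {p : ℕ × ℕ | p.1 < n'} from h)

lemma meas_coord (p : ℕ × ℕ) : Measurable[coal ξ p] (fun ω => ξ ω p.1 p.2) :=
  Measurable.of_comap_le le_rfl

lemma meas_coord' (g : ℕ → ℝ≥0∞) (p : ℕ × ℕ) :
    Measurable[coal ξ p] (fun ω => g (ξ ω p.1 p.2)) :=
  measurable_from_top.comp (meas_coord p)

/-- measurability of the GW process w.r.t. rows `< n` -/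
lemma meas_gw (hm : ∀ n i, Measurable fun ω => ξ ω n i) :
    ∀ n, Measurable[rowsLT ξ n] (fun ω => gw (ξ ω) n) := by
  intro n
  induction n with
  | zero =>
      have : (fun ω => gw (ξ ω) 0) = fun _ => 1 := rfl
      rw [this]
      exact measurable_const
  | succ n ih =>
      apply @measurable_to_countable' ℕ Ω _ _ (rowsLT ξ (n+1)) _
      intro y
      have hset : (fun ω => gw (ξ ω) (n+1)) ⁻¹' {y} =
          ⋃ j, ({ω | gw (ξ ω) n = j} ∩
            {ω | ∑ i ∈ Finset.range j, ξ ω n i = y}) := by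
        ext ω
        simp only [Set.mem_preimage, Set.mem_singleton_iff, Set.mem_iUnion, Set.mem_inter_iff,
          Set.mem_setOf_eq]
        constructor
        · intro h
          exact ⟨gw (ξ ω) n, rfl, h⟩
        · rintro ⟨j, hj, hsum⟩
          show (∑ i ∈ Finset.range (gw (ξ ω) n), ξ ω n i) = y
          rw [hj]; exact hsum
      rw [hset]
      apply MeasurableSet.iUnion
      intro j
      apply MeasurableSet.inter
      · have h1 : Measurable[rowsLT ξ (n+1)] (fun ω => gw (ξ ω) n) :=
          ih.mono (rowsLT_mono (Nat.le_succ n)) le_rfl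
        exact h1 (measurableSet_singleton j)
      · have h2 : Measurable[rowsLT ξ (n+1)] (fun ω => ∑ i ∈ Finset.range j, ξ ω n i) := by
          apply Finset.measurable_sum
          intro i _
          exact ((meas_coord (ξ := ξ) (n, i)).mono (coal_le_rowsLT (Nat.lt_succ_self n)) le_rfl)
        exact h2 (measurableSet_singleton y)

lemma meas_gw' (hm : ∀ n i, Measurable fun ω => ξ ω n i) (n : ℕ) :
    Measurable (fun ω => gw (ξ ω) n) :=
  (meas_gw hm n).mono (rowsLT_le hm n) le_rfl


lemma iIndep_coal (hind : iIndepFun (m := fun _ => ⊤) (fun (p : ℕ × ℕ) ω => ξ ω p.1 p.2) μ) :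
    iIndep (coal ξ) μ := hind

lemma indep_block (hm : ∀ n i, Measurable fun ω => ξ ω n i)
    (hind : iIndepFun (m := fun _ => ⊤) (fun (p : ℕ × ℕ) ω => ξ ω p.1 p.2) μ)
    {S : Set (ℕ × ℕ)} {a : ℕ × ℕ} (ha : a ∉ S) :
    Indep (⨆ p ∈ S, coal ξ p) (coal ξ a) μ := by
  have h := indep_iSup_of_disjoint (fun p => coal_le hm p) (iIndep_coal hind)
    (Set.disjoint_singleton_right.mpr ha : Disjoint S {a})
  rwa [iSup_singleton] at h


lemma prod_split (hm : ∀ n i, Measurable fun ω => ξ ω n i)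
    (hind : iIndepFun (m := fun _ => ⊤) (fun (p : ℕ × ℕ) ω => ξ ω p.1 p.2) μ)
    (n : ℕ) (g : ℕ → ℝ≥0∞) {f : Ω → ℝ≥0∞} (hf : Measurable[rowsLT ξ n] f)
    (F : Finset ℕ) :
    ∫⁻ ω, f ω * ∏ i ∈ F, g (ξ ω n i) ∂μ
      = (∫⁻ ω, f ω ∂μ) * ∏ i ∈ F, ∫⁻ ω, g (ξ ω n i) ∂μ := by
  classical
  induction F using Finset.induction_on with
  | empty => simp
  | @insert a F ha ih =>
      set S : Set (ℕ × ℕ) := {p : ℕ × ℕ | p.1 < n ∨ (p.1 = n ∧ p.2 ∈ F)} with hS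
      have hSle : (⨆ p ∈ S, coal ξ p) ≤ mΩ := iSup₂_le fun p _ => coal_le hm p
      have hrowle : rowsLT ξ n ≤ ⨆ p ∈ S, coal ξ p := by
        apply iSup₂_le
        intro p hp
        exact le_biSup _ (Or.inl hp)
      have hcoalle : ∀ i ∈ F, coal ξ (n, i) ≤ ⨆ p ∈ S, coal ξ p := fun i hi =>
        le_biSup _ (Or.inr ⟨rfl, hi⟩)
      have hmf : Measurable[⨆ p ∈ S, coal ξ p] (fun ω => f ω * ∏ i ∈ F, g (ξ ω n i)) := by
        apply Measurable.mul
        · exact hf.mono hrowle le_rfl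
        · apply Finset.measurable_prod
          intro i hi
          exact (meas_coord' g ((n, i) : ℕ × ℕ)).mono (hcoalle i hi) le_rfl
      have hmg : Measurable[coal ξ (n,a)] (fun ω => g (ξ ω n a)) := meas_coord' g (n, a)
      have hindep : Indep (⨆ p ∈ S, coal ξ p) (coal ξ ((n,a) : ℕ × ℕ)) μ := by
        apply indep_block hm hind
        simp only [hS, Set.mem_setOf_eq]
        push_neg
        exact ⟨le_rfl, fun _ => ha⟩
      have hsplit := lintegral_mul_eq_lintegral_mul_lintegral_of_independent_measurableSpace
        hSle (coal_le hm ((n,a) : ℕ × ℕ)) hindep hmf hmg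
      calc ∫⁻ ω, f ω * ∏ i ∈ insert a F, g (ξ ω n i) ∂μ
          = ∫⁻ ω, (f ω * ∏ i ∈ F, g (ξ ω n i)) * g (ξ ω n a) ∂μ := by
            congr 1
            funext ω
            rw [Finset.prod_insert ha]
            ring
        _ = (∫⁻ ω, f ω * ∏ i ∈ F, g (ξ ω n i) ∂μ) * ∫⁻ ω, g (ξ ω n a) ∂μ := hsplit
        _ = ((∫⁻ ω, f ω ∂μ) * ∏ i ∈ F, ∫⁻ ω, g (ξ ω n i) ∂μ) * ∫⁻ ω, g (ξ ω n a) ∂μ := by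
            rw [ih]
        _ = (∫⁻ ω, f ω ∂μ) * ∏ i ∈ insert a F, ∫⁻ ω, g (ξ ω n i) ∂μ := by
            rw [Finset.prod_insert ha]
            ring

variable (N q) in
lemma lint_xi (hm : ∀ n i, Measurable fun ω => ξ ω n i)
    (hpmf : ∀ n i j, μ {ω | ξ ω n i = j} = ENNReal.ofReal (binomPMF N q j))
    (n i : ℕ) (g : ℕ → ℝ≥0∞) :
    ∫⁻ ω, g (ξ ω n i) ∂μ = ∑' l, g l * ENNReal.ofReal (binomPMF N q l) := by
  rw [← lintegral_map measurable_from_top (hm n i), lintegral_countable']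
  congr 1
  funext l
  congr 1
  rw [Measure.map_apply (hm n i) (measurableSet_singleton l)]
  exact hpmf n i l

lemma lint_pow_gw (hm : ∀ n i, Measurable fun ω => ξ ω n i) (n : ℕ) (s : ℝ≥0∞) :
    ∫⁻ ω, s ^ (gw (ξ ω) n) ∂μ = ∑' j, s ^ j * μ {ω | gw (ξ ω) n = j} := by
  rw [← lintegral_map measurable_from_top (meas_gw' hm n), lintegral_countable']
  congr 1
  funext j
  congr 1
  rw [Measure.map_apply (meas_gw' hm n) (measurableSet_singleton j)]
  rfl


variable (N q) in
lemma gw_step (hm : ∀ n i, Measurable fun ω => ξ ω n i)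
    (hind : iIndepFun (m := fun _ => ⊤) (fun (p : ℕ × ℕ) ω => ξ ω p.1 p.2) μ)
    (hpmf : ∀ n i j, μ {ω | ξ ω n i = j} = ENNReal.ofReal (binomPMF N q j))
    (n : ℕ) (s : ℝ≥0∞) :
    ∫⁻ ω, s ^ (gw (ξ ω) (n+1)) ∂μ
      = ∑' j, (∑' l, s ^ l * ENNReal.ofReal (binomPMF N q l)) ^ j
          * μ {ω | gw (ξ ω) n = j} := by
  classical
  have hptw : (fun ω => s ^ (gw (ξ ω) (n+1)))
      = fun ω => ∑' j, Set.indicator {ω' | gw (ξ ω') n = j}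
          (fun ω' => ∏ i ∈ Finset.range j, s ^ (ξ ω' n i)) ω := by
    funext ω
    rw [tsum_eq_single (gw (ξ ω) n) ?_]
    · rw [Set.indicator_of_mem (by exact rfl)]
      have hdef : gw (ξ ω) (n+1) = ∑ i ∈ Finset.range (gw (ξ ω) n), ξ ω n i := rfl
      rw [hdef, ← Finset.prod_pow_eq_pow_sum]
    · intro j hj
      apply Set.indicator_of_notMem
      simp only [Set.mem_setOf_eq]
      exact fun h => hj h.symm
  rw [hptw]
  rw [lintegral_tsum ?_]
  · congr 1
    funext j
    have hindic : Set.indicator {ω' | gw (ξ ω') n = j}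
        (fun ω' => ∏ i ∈ Finset.range j, s ^ (ξ ω' n i))
        = fun ω => Set.indicator {ω' | gw (ξ ω') n = j} (fun _ => (1:ℝ≥0∞)) ω
            * ∏ i ∈ Finset.range j, s ^ (ξ ω n i) := by
      funext ω
      by_cases h : ω ∈ {ω' | gw (ξ ω') n = j}
      · rw [Set.indicator_of_mem h, Set.indicator_of_mem h, one_mul]
      · rw [Set.indicator_of_notMem h, Set.indicator_of_notMem h, zero_mul]
    rw [hindic]
    have hmeasA : MeasurableSet[rowsLT ξ n] {ω' | gw (ξ ω') n = j} :=
      meas_gw hm n (measurableSet_singleton j)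
    have hfmeas : Measurable[rowsLT ξ n]
        (fun ω => Set.indicator {ω' | gw (ξ ω') n = j} (fun _ => (1:ℝ≥0∞)) ω) :=
      measurable_const.indicator hmeasA
    rw [prod_split hm hind n (fun l => s ^ l) hfmeas (Finset.range j)]
    rw [show ∫⁻ ω, Set.indicator {ω' | gw (ξ ω') n = j} (fun _ => (1:ℝ≥0∞)) ω ∂μ
        = μ {ω' | gw (ξ ω') n = j} from lintegral_indicator_one (rowsLT_le hm n _ hmeasA)]
    have heach : ∀ i ∈ Finset.range j,
        ∫⁻ ω, s ^ (ξ ω n i) ∂μ = ∑' l, s ^ l * ENNReal.ofReal (binomPMF N q l) :=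
      fun i _ => lint_xi N q hm hpmf n i (fun l => s ^ l)
    rw [Finset.prod_congr rfl heach, Finset.prod_const, Finset.card_range]
    ring
  · intro j
    apply AEMeasurable.indicator
    · apply Measurable.aemeasurable
      apply Finset.measurable_prod
      intro i _
      exact measurable_from_top.comp (hm n i)
    · exact (meas_gw' hm n) (measurableSet_singleton j)

variable (N) in
lemma phi_ofReal (hq0 : 0 ≤ q) (hq1 : q ≤ 1) {t : ℝ} (ht0 : 0 ≤ t) :
    (∑' l, (ENNReal.ofReal t) ^ l * ENNReal.ofReal (binomPMF N q l))
      = ENNReal.ofReal ((q * t + (1 - q)) ^ N) := by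
  have hterm : ∀ l, (ENNReal.ofReal t) ^ l * ENNReal.ofReal (binomPMF N q l)
      = ENNReal.ofReal (t ^ l * binomPMF N q l) := by
    intro l
    rw [← ENNReal.ofReal_pow ht0, ← ENNReal.ofReal_mul (pow_nonneg ht0 l)]
  simp only [hterm]
  rw [tsum_eq_sum (s := Finset.range (N+1)) ?_]
  · rw [← ENNReal.ofReal_sum_of_nonneg ?_]
    · congr 1
      rw [add_pow]
      apply Finset.sum_congr rfl
      intro l hl
      rw [binomPMF, mul_pow]
      ring
    · intro l _
      apply mul_nonneg (pow_nonneg ht0 l)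
      rw [binomPMF]
      have : (0:ℝ) ≤ 1 - q := by linarith
      positivity
  · intro l hl
    have hN : N < l := by
      simp only [Finset.mem_range] at hl
      omega
    rw [binomPMF, Nat.choose_eq_zero_of_lt hN]
    simp


variable (N q) in
/-- the one-step pgf map -/
def phiR (N : ℕ) (q : ℝ) : ℝ → ℝ := fun t => (q * t + (1 - q)) ^ N

lemma phiR_mem (hq0 : 0 ≤ q) (hq1 : q ≤ 1) {t : ℝ} (ht0 : 0 ≤ t) (ht1 : t ≤ 1) :
    0 ≤ phiR N q t ∧ phiR N q t ≤ 1 := by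
  have h0 : 0 ≤ q * t + (1 - q) := by nlinarith
  have h1 : q * t + (1 - q) ≤ 1 := by nlinarith
  exact ⟨pow_nonneg h0 N, pow_le_one₀ h0 h1⟩

lemma phiR_iter_mem (hq0 : 0 ≤ q) (hq1 : q ≤ 1) :
    ∀ n, 0 ≤ (phiR N q)^[n] 0 ∧ (phiR N q)^[n] 0 ≤ 1 := by
  intro n
  induction n with
  | zero => simp
  | succ n ih =>
      rw [Function.iterate_succ_apply']
      exact phiR_mem hq0 hq1 ih.1 ih.2

lemma gw_pgf [IsProbabilityMeasure μ] (hm : ∀ n i, Measurable fun ω => ξ ω n i)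
    (hind : iIndepFun (m := fun _ => ⊤) (fun (p : ℕ × ℕ) ω => ξ ω p.1 p.2) μ)
    (hpmf : ∀ n i j, μ {ω | ξ ω n i = j} = ENNReal.ofReal (binomPMF N q j))
    (hq0 : 0 ≤ q) (hq1 : q ≤ 1) :
    ∀ n, ∀ t : ℝ, 0 ≤ t → t ≤ 1 →
      ∫⁻ ω, (ENNReal.ofReal t) ^ (gw (ξ ω) n) ∂μ = ENNReal.ofReal ((phiR N q)^[n] t) := by
  intro n
  induction n with
  | zero =>
      intro t ht0 ht1
      have : (fun ω => (ENNReal.ofReal t) ^ (gw (ξ ω) 0)) = fun _ => ENNReal.ofReal t := by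
        funext ω
        show (ENNReal.ofReal t) ^ (1 : ℕ) = _
        rw [pow_one]
      rw [this, lintegral_const, measure_univ, mul_one, Function.iterate_zero_apply]
  | succ n ih =>
      intro t ht0 ht1
      have hphit := phiR_mem (N := N) hq0 hq1 ht0 ht1
      calc ∫⁻ ω, (ENNReal.ofReal t) ^ (gw (ξ ω) (n+1)) ∂μ
          = ∑' j, (∑' l, (ENNReal.ofReal t) ^ l * ENNReal.ofReal (binomPMF N q l)) ^ j
              * μ {ω | gw (ξ ω) n = j} := gw_step N q hm hind hpmf n _
        _ = ∑' j, (ENNReal.ofReal (phiR N q t)) ^ j * μ {ω | gw (ξ ω) n = j} := by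
              rw [phi_ofReal N hq0 hq1 ht0]
              rfl
        _ = ∫⁻ ω, (ENNReal.ofReal (phiR N q t)) ^ (gw (ξ ω) n) ∂μ :=
              (lint_pow_gw hm n _).symm
        _ = ENNReal.ofReal ((phiR N q)^[n] (phiR N q t)) := ih _ hphit.1 hphit.2
        _ = ENNReal.ofReal ((phiR N q)^[n+1] t) := by
              rw [Function.iterate_succ_apply]

lemma gw_ext [IsProbabilityMeasure μ] (hm : ∀ n i, Measurable fun ω => ξ ω n i)
    (hind : iIndepFun (m := fun _ => ⊤) (fun (p : ℕ × ℕ) ω => ξ ω p.1 p.2) μ)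
    (hpmf : ∀ n i j, μ {ω | ξ ω n i = j} = ENNReal.ofReal (binomPMF N q j))
    (hq0 : 0 ≤ q) (hq1 : q ≤ 1) (n : ℕ) :
    μ {ω | gw (ξ ω) n = 0} = ENNReal.ofReal ((phiR N q)^[n] 0) := by
  have h := gw_pgf hm hind hpmf hq0 hq1 n 0 le_rfl zero_le_one
  rw [ENNReal.ofReal_zero] at h
  rw [← h]
  have hptw : (fun ω => (0:ℝ≥0∞) ^ (gw (ξ ω) n))
      = fun ω => Set.indicator {ω' | gw (ξ ω') n = 0} (fun _ => (1:ℝ≥0∞)) ω := by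
    funext ω
    by_cases h0 : gw (ξ ω) n = 0
    · rw [Set.indicator_of_mem (show ω ∈ {ω' | gw (ξ ω') n = 0} from h0), h0, pow_zero]
    · rw [Set.indicator_of_notMem (show ω ∉ {ω' | gw (ξ ω') n = 0} from h0), zero_pow h0]
  rw [hptw,
    show ∫⁻ ω, Set.indicator {ω' | gw (ξ ω') n = 0} (fun _ => (1:ℝ≥0∞)) ω ∂μ
      = μ {ω' | gw (ξ ω') n = 0} from
        lintegral_indicator_one ((meas_gw' hm n) (measurableSet_singleton 0))]

lemma gw_surv [IsProbabilityMeasure μ] (hm : ∀ n i, Measurable fun ω => ξ ω n i)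
    (hind : iIndepFun (m := fun _ => ⊤) (fun (p : ℕ × ℕ) ω => ξ ω p.1 p.2) μ)
    (hpmf : ∀ n i j, μ {ω | ξ ω n i = j} = ENNReal.ofReal (binomPMF N q j))
    (hq0 : 0 ≤ q) (hq1 : q ≤ 1) (n : ℕ) :
    (μ {ω | 0 < gw (ξ ω) n}).toReal = 1 - (phiR N q)^[n] 0 := by
  have hset : {ω | 0 < gw (ξ ω) n} = {ω | gw (ξ ω) n = 0}ᶜ := by
    ext ω
    simp [Nat.pos_iff_ne_zero]
  have hmem := phiR_iter_mem (N := N) hq0 hq1 n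
  have hms : MeasurableSet {ω | gw (ξ ω) n = 0} := (meas_gw' hm n) (measurableSet_singleton 0)
  rw [hset, prob_compl_eq_one_sub hms, gw_ext hm hind hpmf hq0 hq1 n]
  rw [ENNReal.toReal_sub_of_le (ENNReal.ofReal_le_one.mpr hmem.2) ENNReal.one_ne_top]
  rw [ENNReal.toReal_one, ENNReal.toReal_ofReal hmem.1]

end Prob

/-- Survival probability bound for slightly supercritical binomial Galton–Watson
processes: if `q_k ≤ 1/2` and `1 ≤ N_k q_k ≤ 1 + C/k` for large `k`, then
`limsup_k k·P(X^{(k)}_k > 0) ≤ 4C/(1 − e^{−C})`. -/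
theorem gw_survival_limsup (C : ℝ) (hC : 0 < C) (N : ℕ → ℕ) (q : ℕ → ℝ)
    (Ω : Type) [MeasurableSpace Ω] (μ : ℕ → Measure Ω)
    (hμ : ∀ k, IsProbabilityMeasure (μ k))
    (ξ : ℕ → Ω → ℕ → ℕ → ℕ)
    (hξ : ∀ k, IsBinomField (μ k) (N k) (q k) (ξ k))
    (k0 : ℕ)
    (hq : ∀ k, k0 ≤ k → q k ≤ 1 / 2)
    (hNq : ∀ k, k0 ≤ k → 1 ≤ (N k : ℝ) * q k ∧ (N k : ℝ) * q k ≤ 1 + C / k) :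
    limsup (fun k : ℕ => (k : ℝ) * ((μ k) {ω | 0 < gw (ξ k ω) k}).toReal) atTop
      ≤ 4 * C / (1 - Real.exp (-C)) := by
  have hcob : IsCoboundedUnder (· ≤ ·) atTop
      (fun k : ℕ => (k : ℝ) * ((μ k) {ω | 0 < gw (ξ k ω) k}).toReal) := by
    apply isCoboundedUnder_le_of_le atTop (x := 0)
    intro k
    positivity
  apply limsup_le_of_le hcob
  filter_upwards [eventually_ge_atTop (max k0 1)] with k hk
  haveI := hμ k
  obtain ⟨hm, hind, hpmf⟩ := hξ k
  have hk0 : k0 ≤ k := le_trans (le_max_left _ _) hk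
  have hk1 : 1 ≤ k := le_trans (le_max_right _ _) hk
  have hq2 := hq k hk0
  obtain ⟨h1, h2⟩ := hNq k hk0
  have hq0 : 0 ≤ q k := by
    by_contra h
    push_neg at h
    have : (N k : ℝ) * q k ≤ 0 := mul_nonpos_of_nonneg_of_nonpos (Nat.cast_nonneg _) (le_of_lt h)
    linarith
  have hq1' : q k ≤ 1 := by linarith
  set P : ℕ → ℝ := fun n => 1 - (phiR (N k) (q k))^[n] 0 with hP
  have hsurv : ((μ k) {ω | 0 < gw (ξ k ω) k}).toReal = P k :=
    gw_surv hm hind hpmf hq0 hq1' k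
  have hP0 : P 0 = 1 := by simp [hP]
  have hPrec : ∀ n, P (n+1) = 1 - (1 - q k * P n) ^ (N k) := by
    intro n
    simp only [hP, Function.iterate_succ_apply', phiR]
    congr 2
    ring
  rw [hsurv]
  exact per_k hC hk1 hq2 h1 h2 P hP0 hPrec


end
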